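/- For n < 2 (so m = 1 - 1/n < 1/2), the derivative of the Mualem relative permeability K_r(S) = S^{1/2}(1 - (1 - S^{1/m})^m)² is unbounded as S → 1⁻ (i.e., K_r is not Lipschitz on [0,1]). -/
import Mathlib


open Real Filter

theorem mualem_Kr_not_lipschitz
    (n m : ℝ) (hn : 1 < n) (hn2 : n < 2) (hm : m = 1 - 1/n)
    (Kr : ℝ → ℝ) (hKr : ∀ S, Kr S = Real.sqrt S * (1 - (1 - S ^ (1/m)) ^ m) ^ 2) :
    Filter.limsup (fun S => (((Kr 1 - Kr S) / (1 - S) : ℝ) : EReal)) (nhdsWithin 1 (Set.Iio 1)) = ⊤ ∧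
    ∀ C : NNReal, ¬ LipschitzOnWith C Kr (Set.Icc (0 : ℝ) 1) := by
  have hm0 : 0 < m := by
    rw [hm]
    have : 1/n < 1 := by rw [div_lt_one (by linarith)]; linarith
    linarith
  have hm1 : m < 1 := by
    rw [hm]
    have : 0 < 1/n := by positivity
    linarith
  have hKr1 : Kr 1 = 1 := by
    rw [hKr 1, Real.one_rpow, sub_self, Real.zero_rpow hm0.ne', Real.sqrt_one]
    norm_num
  -- key lower bound
  have key : ∀ S ∈ Set.Ioo (0:ℝ) 1,
      (1 - S ^ (1/m)) ^ (m - 1) ≤ (Kr 1 - Kr S) / (1 - S) := by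
    intro S hS
    obtain ⟨hS0, hS1⟩ := hS
    set u := 1 - S ^ (1/m) with hu
    have hSm0 : 0 < S ^ (1/m) := Real.rpow_pos_of_pos hS0 _
    have hSm1 : S ^ (1/m) < 1 := Real.rpow_lt_one hS0.le hS1 (by positivity)
    have hu0 : 0 < u := by simp only [hu]; linarith
    have hu1 : u < 1 := by simp only [hu]; linarith
    have hum0 : 0 < u ^ m := Real.rpow_pos_of_pos hu0 _
    have hum1 : u ^ m < 1 := Real.rpow_lt_one hu0.le hu1 hm0
    -- numerator bound : u^m ≤ Kr 1 - Kr S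
    have hnum : u ^ m ≤ Kr 1 - Kr S := by
      rw [hKr1, hKr S, ← hu]
      have h1 : Real.sqrt S ≤ 1 := by
        rw [show (1:ℝ) = Real.sqrt 1 by simp]
        exact Real.sqrt_le_sqrt hS1.le
      nlinarith [Real.sqrt_nonneg S, sq_nonneg (1 - u ^ m)]
    -- denominator bound : 0 < 1 - S ≤ u
    have hden : 1 - S ≤ u := by
      have hS' : S = (S ^ (1/m)) ^ m := by
        rw [← Real.rpow_mul hS0.le, one_div_mul_cancel hm0.ne', Real.rpow_one]
      have : (S ^ (1/m)) ^ (1:ℝ) ≤ (S ^ (1/m)) ^ m :=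
        Real.rpow_le_rpow_of_exponent_ge hSm0 hSm1.le hm1.le
      rw [Real.rpow_one] at this
      have hfin : S ^ (1/m) ≤ S := by
        calc S ^ (1/m) ≤ (S ^ (1/m)) ^ m := this
          _ = S := hS'.symm
      simp only [hu]; linarith
    have hdpos : (0:ℝ) < 1 - S := by linarith
    have hrw : u ^ (m - 1) = u ^ m / u := by
      rw [Real.rpow_sub hu0, Real.rpow_one]
    rw [hrw]
    exact div_le_div₀ (by linarith) hnum hdpos hden
  -- tendsto of the lower bound to atTop
  have htend_u : Tendsto (fun S : ℝ => 1 - S ^ (1/m)) (nhdsWithin 1 (Set.Iio 1)) (nhds 0) := by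
    have hc : ContinuousAt (fun S : ℝ => 1 - S ^ (1/m)) 1 :=
      continuousAt_const.sub (Real.continuousAt_rpow_const 1 (1/m) (Or.inl one_ne_zero))
    have h0 : (fun S : ℝ => 1 - S ^ (1/m)) 1 = 0 := by simp
    exact h0 ▸ hc.continuousWithinAt
  have htend_u' : Tendsto (fun S : ℝ => 1 - S ^ (1/m)) (nhdsWithin 1 (Set.Iio 1))
      (nhdsWithin 0 (Set.Ioi 0)) := by
    apply tendsto_nhdsWithin_of_tendsto_nhds_of_eventually_within _ htend_u
    filter_upwards [self_mem_nhdsWithin,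
      Ioo_mem_nhdsLT_of_mem (by constructor <;> norm_num : (1:ℝ) ∈ Set.Ioc 0 1)] with S hS1 hS0
    have : S ^ (1/m) < 1 := Real.rpow_lt_one hS0.1.le hS1 (by positivity)
    simpa using this
  have htend_pow : Tendsto (fun x : ℝ => x ^ (m - 1)) (nhdsWithin 0 (Set.Ioi 0)) atTop := by
    have h1 : Tendsto (fun x : ℝ => x⁻¹) (nhdsWithin 0 (Set.Ioi 0)) atTop :=
      tendsto_inv_nhdsGT_zero
    have h2 : Tendsto (fun z : ℝ => z ^ (1 - m)) atTop atTop :=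
      tendsto_rpow_atTop (by linarith)
    have := h2.comp h1
    apply this.congr'
    filter_upwards [self_mem_nhdsWithin] with x hx
    rw [Function.comp_apply, Real.inv_rpow (le_of_lt hx), ← Real.rpow_neg (le_of_lt hx), neg_sub]
  have htendf : Tendsto (fun S => (Kr 1 - Kr S) / (1 - S)) (nhdsWithin 1 (Set.Iio 1)) atTop := by
    apply tendsto_atTop_mono' _ _ (htend_pow.comp htend_u')
    filter_upwards [Ioo_mem_nhdsLT_of_mem (by constructor <;> norm_num : (1:ℝ) ∈ Set.Ioc 0 1)]
      with S hS
    exact key S hS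
  constructor
  · have : Tendsto (fun S => (((Kr 1 - Kr S) / (1 - S) : ℝ) : EReal))
        (nhdsWithin 1 (Set.Iio 1)) (nhds ⊤) := by
      rw [EReal.tendsto_nhds_top_iff_real]
      intro x
      filter_upwards [htendf.eventually_gt_atTop x] with S hS
      exact_mod_cast hS
    exact this.limsup_eq
  · intro C hC
    have hub : ∀ᶠ S in nhdsWithin 1 (Set.Iio 1),
        (Kr 1 - Kr S) / (1 - S) ≤ C := by
      filter_upwards [Ioo_mem_nhdsLT_of_mem (by constructor <;> norm_num : (1:ℝ) ∈ Set.Ioc 0 1)]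
        with S hS
      have h1 : (1:ℝ) ∈ Set.Icc (0:ℝ) 1 := by constructor <;> norm_num
      have h2 : S ∈ Set.Icc (0:ℝ) 1 := ⟨hS.1.le, hS.2.le⟩
      have := hC.dist_le_mul 1 h1 S h2
      rw [Real.dist_eq, Real.dist_eq] at this
      have hd : |1 - S| = 1 - S := abs_of_pos (by linarith [hS.2])
      rw [hd] at this
      rw [div_le_iff₀ (by linarith [hS.2] : (0:ℝ) < 1 - S)]
      exact le_trans (le_abs_self _) this
    have := (htendf.eventually_gt_atTop (C : ℝ)).and hub
    obtain ⟨S, h1, h2⟩ := this.exists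
    linarith
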